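/- Fix i ≥ 1 and an element c of M with c ≠ ¬Δⁱ0. Define F_Δ(p,q) = (∇q ∧ ((Δp ↔ q) ↔ c)) ∨ (¬∇q ∧ ¬Δⁱ0). Then for all p, q in M: Δp = q if and only if F_Δ(p,q) = c. -/

import Mathlib

/-!
∇q is the constant sequence q(0). If q(0) = 1 the formula reduces to (Δp ↔ q) ↔ c, which equals c
exactly when Δp = q. If q(0) = 0 it reduces to ¬Δⁱ0 ≠ c, while Δp ≠ q because (Δp)(0) = 1.
-/

/-- The algebra of infinite binary sequences. -/
abbrev M := ℕ → Bool

/-- Pointwise boolean operations. -/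
def mAnd (a b : M) : M := fun n => a n && b n
def mOr (a b : M) : M := fun n => a n || b n
def mImp (a b : M) : M := fun n => !a n || b n
def mNeg (a : M) : M := fun n => !a n
def mIff (a b : M) : M := fun n => a n == b n
def mZero : M := fun _ => false
def mOne : M := fun _ => true

/-- The operator Δ: (Δα)(0)=1 and (Δα)(n+1)=α(0)∧⋯∧α(n). -/
def Delta (a : M) : M := fun n => decide (∀ k, k < n → a k = true)

def box (a : M) : M := mAnd a (Delta a)
def nabla (a : M) : M := box (mNeg (box (mNeg (box a))))

lemma box_eq_true_iff (a : M) (n : ℕ) : box a n = true ↔ ∀ k ≤ n, a k = true := by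
  simp only [box, mAnd, Delta, Bool.and_eq_true, decide_eq_true_eq]
  constructor
  · rintro ⟨han, hlt⟩ k hk
    rcases hk.lt_or_eq with hk | rfl
    · exact hlt k hk
    · exact han
  · intro h
    exact ⟨h n le_rfl, fun k hk => h k hk.le⟩

lemma box_apply_zero (a : M) : box a 0 = a 0 := by
  simp [box, mAnd, Delta]

lemma nabla_apply (q : M) (n : ℕ) : nabla q n = q 0 := by
  cases h : q 0
  · rw [Bool.eq_false_iff]
    intro hn
    -- ∇q(n) = 1 forces ¬□¬□q to hold at 0, i.e. □q(0) = q(0) = 1.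
    have h₀ := (box_eq_true_iff _ n).mp hn 0 n.zero_le
    simp [mNeg, box_apply_zero, h] at h₀
  · refine (box_eq_true_iff _ n).mpr fun k _ => ?_
    have hbox : box (mNeg (box q)) k = false := by
      rw [Bool.eq_false_iff]
      intro hk
      have h₀ := (box_eq_true_iff _ k).mp hk 0 k.zero_le
      simp [mNeg, box_apply_zero, h] at h₀
    simp [mNeg, hbox]

lemma Delta_apply_zero (a : M) : Delta a 0 = true := by
  simp [Delta]

lemma mIff_mIff_eq_right_iff (a b c : M) : mIff (mIff a b) c = c ↔ a = b := by
  simp only [funext_iff, mIff]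
  refine forall_congr' fun n => ?_
  cases a n <;> cases b n <;> cases c n <;> decide

theorem stmt15_general (i : ℕ) (c : M) (hc : c ≠ mNeg (Delta^[i] mZero))
    (p q : M) :
    Delta p = q ↔
      mOr (mAnd (nabla q) (mIff (mIff (Delta p) q) c))
          (mAnd (mNeg (nabla q)) (mNeg (Delta^[i] mZero))) = c := by
  cases h₀ : q 0
  · have hDelta : Delta p ≠ q := fun h => by
      simpa [h, h₀] using Delta_apply_zero p
    have hF : mOr (mAnd (nabla q) (mIff (mIff (Delta p) q) c))
        (mAnd (mNeg (nabla q)) (mNeg (Delta^[i] mZero))) = mNeg (Delta^[i] mZero) := by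
      funext n
      simp [mOr, mAnd, mNeg, nabla_apply, h₀]
    rw [hF]
    exact iff_of_false hDelta (Ne.symm hc)
  · have hF : mOr (mAnd (nabla q) (mIff (mIff (Delta p) q) c))
        (mAnd (mNeg (nabla q)) (mNeg (Delta^[i] mZero))) = mIff (mIff (Delta p) q) c := by
      funext n
      simp [mOr, mAnd, mNeg, nabla_apply, h₀]
    rw [hF, mIff_mIff_eq_right_iff]

/-- Δp = q iff F_Δ(p,q) = c, where c ≠ ¬Δⁱ0. -/
theorem stmt15 (i : ℕ) (hi : 1 ≤ i) (c : M) (hc : c ≠ mNeg (Delta^[i] mZero))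
    (p q : M) :
    Delta p = q ↔
      mOr (mAnd (nabla q) (mIff (mIff (Delta p) q) c))
          (mAnd (mNeg (nabla q)) (mNeg (Delta^[i] mZero))) = c :=
  stmt15_general i c hc p q
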